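/- For Hilbert A-modules H, K over a C*-algebra A and an adjointable operator T : H → K, T is surjective if and only if T* is bounded below with respect to the inner product, i.e., there exists m > 0 such that ⟨T*x, T*x⟩ ≥ m⟨x,x⟩ for all x ∈ K. -/

import Mathlib

open scoped RightActions

/-- The pre-2025 Mathlib notion of a Hilbert C⋆-module: a *right* `A`-module `E`
(action of `Aᵐᵒᵖ`), with an `A`-valued inner product linear in the second argument,
`⟪x, y <• a⟫ = ⟪x, y⟫ * a`. (Mathlib's `CStarModule` now uses left modules.) -/
class CStarModuleRight (A E : Type*) [NonUnitalSemiring A] [StarRing A] [Module ℂ A]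
    [AddCommGroup E] [Module ℂ E] [PartialOrder A] [SMul Aᵐᵒᵖ E] [Norm A] [Norm E]
    extends Inner A E where
  inner_add_right {x} {y} {z} : inner x (y + z) = inner x y + inner x z
  inner_self_nonneg {x} : 0 ≤ inner x x
  inner_self {x} : inner x x = 0 ↔ x = 0
  inner_op_smul_right {a : A} {x y : E} : inner x (y <• a) = inner x y * a
  inner_smul_right_complex {z : ℂ} {x} {y} : inner x (z • y) = z • inner x y
  star_inner x y : star (inner x y) = inner y x
  norm_eq_sqrt_norm_inner_self x : ‖x‖ = Real.sqrt ‖inner x x‖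

/-!
Put `S = T T⋆`, an element of the C⋆-algebra of adjointable operators on `K`, so that
`⟪S x, x⟫ = ⟪T⋆ x, T⋆ x⟫`. Each side of the equivalence makes `S` bounded below,
`c ‖x‖ ≤ ‖S x‖`: the inequality `m ⟪x, x⟫ ≤ ⟪S x, x⟫` after taking norms, surjectivity of `T`
through the open mapping theorem. A self-adjoint element `a` of a C⋆-algebra that is bounded
below in this sense is invertible, for otherwise a continuous function of `a` peaked at
`0 ∈ σ(a)` would be almost annihilated by `a`. Invertibility of `S` gives surjectivity of `T`
at once. Conversely `S` is positive (for `t < 0`, `S - t` is bounded below, so `t ∉ σ(S)`), and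
being invertible its spectrum lies in some `[m, ∞)` with `m > 0`; then `S - m ≥ 0`, which
yields `m ⟪x, x⟫ ≤ ⟪S x, x⟫`.
-/

lemma IsSelfAdjoint.isUnit_of_mul_norm_le_norm_mul {B : Type*} [CStarAlgebra B] {a : B}
    (ha : IsSelfAdjoint a) {c : ℝ} (hc : 0 < c) (h : ∀ b : B, c * ‖b‖ ≤ ‖a * b‖) :
    IsUnit a := by
  by_contra hu
  have h0 : (0 : ℝ) ∈ spectrum ℝ a := spectrum.zero_mem_iff ℝ |>.mpr hu
  let f : ℝ → ℝ := fun t => c / (c + 2 * |t|)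
  have hf : Continuous f := continuous_const.div (by fun_prop) fun t => by positivity
  have h_one : 1 ≤ ‖cfc f a‖ := by
    simpa [f, hc.ne'] using norm_apply_le_norm_cfc f a h0
  have h_small : ‖a * cfc f a‖ ≤ c / 2 := by
    have h_mul : cfc (fun t => t * f t) a = a * cfc f a := by
      rw [cfc_mul (fun t => t) f a continuousOn_id hf.continuousOn, cfc_id' ℝ a]
    rw [← h_mul]
    refine norm_cfc_le (by positivity) fun t _ => ?_
    rw [norm_mul, Real.norm_eq_abs, Real.norm_of_nonneg (by positivity), mul_div_assoc']
    exact div_le_of_le_mul₀ (by positivity) (by positivity) (by nlinarith [abs_nonneg t])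
  nlinarith [h (cfc f a)]

noncomputable section

namespace CStarModuleRight

section

variable {A E : Type*} [CStarAlgebra A] [PartialOrder A]
  [NormedAddCommGroup E] [NormedSpace ℂ E] [SMul Aᵐᵒᵖ E] [CStarModuleRight A E]

attribute [simp] inner_add_right star_inner inner_op_smul_right inner_smul_right_complex

@[simp]
lemma inner_add_left {x y z : E} : inner A (x + y) z = inner A x z + inner A y z := by
  rw [← star_inner, inner_add_right, star_add, star_inner, star_inner]

@[simp]
lemma inner_op_smul_left {a : A} {x y : E} : inner A (x <• a) y = star a * inner A x y := by
  rw [← star_inner]; simp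

@[simp]
lemma inner_smul_left_complex {z : ℂ} {x y : E} : inner A (z • x) y = star z • inner A x y := by
  rw [← star_inner]; simp

@[simp]
lemma inner_smul_left_real {r : ℝ} {x y : E} : inner A (r • x) y = r • inner A x y := by
  simpa using inner_smul_left_complex (A := A) (z := r) (x := x) (y := y)

@[simp]
lemma inner_smul_right_real {r : ℝ} {x y : E} : inner A x (r • y) = r • inner A x y := by
  simpa using inner_smul_right_complex (A := A) (z := r) (x := x) (y := y)

variable (A E) in
def innerₛₗ : E →ₗ⋆[ℂ] E →ₗ[ℂ] A :=
  LinearMap.mk₂'ₛₗ _ _ (fun x y => inner A x y) (fun _ _ _ => inner_add_left)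
    (fun _ _ _ => inner_smul_left_complex) (fun _ _ _ => inner_add_right)
    (fun _ _ _ => inner_smul_right_complex)

@[simp] lemma innerₛₗ_apply {x y : E} : innerₛₗ A E x y = inner A x y := rfl

@[simp] lemma inner_zero_left {x : E} : inner A 0 x = 0 := by simp [← innerₛₗ_apply]
@[simp] lemma inner_zero_right {x : E} : inner A x 0 = 0 := by simp [← innerₛₗ_apply]
@[simp] lemma inner_sub_left {x y z : E} : inner A (x - y) z = inner A x z - inner A y z := by
  simp [← innerₛₗ_apply]
@[simp] lemma inner_sub_right {x y z : E} : inner A x (y - z) = inner A x y - inner A x z := by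
  simp [← innerₛₗ_apply]

lemma ext_inner_left {y z : E} (h : ∀ x, inner A x y = inner A x z) : y = z := by
  rw [← sub_eq_zero, ← inner_self (A := A), inner_sub_right, h, sub_self]

lemma norm_sq_eq (x : E) : ‖x‖ ^ 2 = ‖inner A x x‖ := by
  rw [norm_eq_sqrt_norm_inner_self (A := A) x, Real.sq_sqrt (norm_nonneg _)]

variable [StarOrderedRing A]

lemma inner_mul_inner_swap_le (x y : E) :
    inner A y x * inner A x y ≤ ‖x‖ ^ 2 • inner A y y := by
  rcases eq_or_ne x 0 with rfl | hx
  · simp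
  set a := inner A x y with ha
  set n := ‖x‖ ^ 2
  have hconj : star a * inner A x x * a ≤ n • (star a * a) := by
    rw [show n = ‖inner A x x‖ from norm_sq_eq x]
    exact CStarAlgebra.star_left_conjugate_le_norm_smul (star_inner x x)
  have hexpand : inner A (x <• a - n • y) (x <• a - n • y)
      = star a * inner A x x * a - n • (star a * a) - n • (star a * a) + n • n • inner A y y := by
    simp only [inner_sub_left, inner_sub_right, inner_op_smul_left, inner_op_smul_right,
      inner_smul_left_real, inner_smul_right_real, ← star_inner x y, ← ha, sub_mul,
      smul_mul_assoc, smul_sub]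
    abel
  have h : n • (star a * a) ≤ n • (n • inner A y y) := by
    have := (inner_self_nonneg (A := A) (x := x <• a - n • y)).trans_eq hexpand
    rw [← sub_nonneg]
    calc (0 : A) ≤ _ := this
      _ ≤ n • (star a * a) - n • (star a * a) - n • (star a * a) + n • n • inner A y y := by
        gcongr
      _ = _ := by abel
  rw [← star_inner x y]
  exact (smul_le_smul_iff_of_pos_left (by positivity)).mp h

lemma norm_inner_le (x y : E) : ‖inner A x y‖ ≤ ‖x‖ * ‖y‖ := by
  have hsq : ‖inner A x y‖ ^ 2 ≤ (‖x‖ * ‖y‖) ^ 2 := calc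
    ‖inner A x y‖ ^ 2 = ‖inner A y x * inner A x y‖ := by
      rw [← star_inner x y, CStarRing.norm_star_mul_self, pow_two]
    _ ≤ ‖‖x‖ ^ 2 • inner A y y‖ := by
      refine CStarAlgebra.norm_le_norm_of_nonneg_of_le ?_ (inner_mul_inner_swap_le x y)
      rw [← star_inner x y]
      exact star_mul_self_nonneg _
    _ = (‖x‖ * ‖y‖) ^ 2 := by rw [norm_smul, mul_pow, norm_sq_eq (A := A) y]; simp
  exact pow_le_pow_iff_left₀ (norm_nonneg _) (by positivity) two_ne_zero |>.mp hsq

variable (A E) in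
def innerSL : E →L⋆[ℂ] E →L[ℂ] A :=
  LinearMap.mkContinuous₂ (innerₛₗ A E) 1 fun x y => by simpa using norm_inner_le x y

lemma continuous_inner : Continuous fun p : E × E => inner A p.1 p.2 :=
  show Continuous fun p : E × E => innerSL A E p.1 p.2 by fun_prop

lemma mul_norm_le_of_smul_inner_self_le {m : ℝ} (hm : 0 ≤ m) {x y : E}
    (h : m • inner A x x ≤ inner A y x) : m * ‖x‖ ≤ ‖y‖ := by
  have hsq : m * ‖x‖ ^ 2 ≤ ‖y‖ * ‖x‖ := calc
    m * ‖x‖ ^ 2 = ‖m • inner A x x‖ := by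
      rw [norm_smul, norm_sq_eq (A := A), Real.norm_of_nonneg hm]
    _ ≤ ‖inner A y x‖ :=
      CStarAlgebra.norm_le_norm_of_nonneg_of_le (smul_nonneg hm inner_self_nonneg) h
    _ ≤ ‖y‖ * ‖x‖ := norm_inner_le y x
  rcases (norm_nonneg x).eq_or_lt with hx | hx
  · simp [← hx]
  · nlinarith

lemma norm_sq_le_of_inner_eq {F : Type*} [NormedAddCommGroup F] [NormedSpace ℂ F] [SMul Aᵐᵒᵖ F]
    [CStarModuleRight A F] {T : F → E} {S : E → F} (h : ∀ x y, inner A (T x) y = inner A x (S y))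
    (y : E) : ‖S y‖ ^ 2 ≤ ‖T (S y)‖ * ‖y‖ := by
  rw [norm_sq_eq (A := A), ← h]
  exact norm_inner_le _ _

lemma exists_mul_norm_le_norm_apply_adjoint_of_surjective {F : Type*} [NormedAddCommGroup F]
    [NormedSpace ℂ F] [CompleteSpace F] [SMul Aᵐᵒᵖ F] [CStarModuleRight A F] [CompleteSpace E]
    {T : F →L[ℂ] E} {Ts : E → F} (hT : ∀ x y, inner A (T x) y = inner A x (Ts y))
    (hsurj : Function.Surjective T) : ∃ c > 0, ∀ y, c * ‖y‖ ≤ ‖T (Ts y)‖ := by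
  obtain ⟨C, hC, hpre⟩ := T.exists_preimage_norm_le hsurj
  have hTs (y : E) : ‖y‖ ≤ C * ‖Ts y‖ := by
    obtain ⟨x, rfl, hx⟩ := hpre y
    have h := calc ‖T x‖ ^ 2 = ‖inner A x (Ts (T x))‖ := by rw [norm_sq_eq (A := A), hT]
      _ ≤ ‖x‖ * ‖Ts (T x)‖ := norm_inner_le _ _
      _ ≤ C * ‖T x‖ * ‖Ts (T x)‖ := by gcongr
    nlinarith [norm_nonneg (T x), mul_nonneg hC.le (norm_nonneg (Ts (T x)))]
  refine ⟨(C ^ 2)⁻¹, by positivity, fun y => ?_⟩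
  have h := norm_sq_le_of_inner_eq hT y
  rw [inv_mul_le_iff₀ (by positivity)]
  nlinarith [hTs y, norm_nonneg y, norm_nonneg (Ts y),
    mul_nonneg (sq_nonneg C) (norm_nonneg (T (Ts y)))]

end

section

variable {A K : Type*} [CStarAlgebra A] [PartialOrder A]
  [NormedAddCommGroup K] [NormedSpace ℂ K] [SMul Aᵐᵒᵖ K] [CStarModuleRight A K]

variable (A K) in
def adjointable : Subalgebra ℂ (K →L[ℂ] K) where
  carrier := {a | ∃ b : K →L[ℂ] K, ∀ x y, inner A (a x) y = inner A x (b y)}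
  mul_mem' := by
    rintro a a' ⟨b, hb⟩ ⟨b', hb'⟩
    exact ⟨b' * b, fun x y => by simp [hb, hb']⟩
  add_mem' := by
    rintro a a' ⟨b, hb⟩ ⟨b', hb'⟩
    exact ⟨b + b', fun x y => by simp [hb, hb']⟩
  algebraMap_mem' z := ⟨star z • 1, fun x y => by simp [Algebra.algebraMap_eq_smul_one]⟩

namespace adjointable

instance : CoeFun (adjointable A K) fun _ => K → K := ⟨fun a => (a : K →L[ℂ] K)⟩

def adjoint (a : adjointable A K) : K →L[ℂ] K := a.2.choose

lemma adjoint_inner_right (a : adjointable A K) (x y : K) :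
    inner A x (adjoint a y) = inner A (a x) y :=
  (a.2.choose_spec x y).symm

lemma adjoint_inner_left (a : adjointable A K) (x y : K) :
    inner A (adjoint a x) y = inner A x (a y) := by
  rw [← star_inner, adjoint_inner_right, star_inner]

lemma adjoint_eq_of_inner {a : adjointable A K} {b : K →L[ℂ] K}
    (h : ∀ x y, inner A (a x) y = inner A x (b y)) : adjoint a = b :=
  ContinuousLinearMap.ext fun y => ext_inner_left fun x => by rw [adjoint_inner_right, h]

instance : StarRing (adjointable A K) where
  star a := ⟨adjoint a, a, adjoint_inner_left a⟩
  star_involutive a := Subtype.ext <| adjoint_eq_of_inner (adjoint_inner_left a)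
  star_mul a b := Subtype.ext <| adjoint_eq_of_inner fun x y => by
    simp [adjoint_inner_right]
  star_add a b := Subtype.ext <| adjoint_eq_of_inner fun x y => by
    simp [adjoint_inner_right]

@[simp]
lemma coe_star (a : adjointable A K) : ((star a : adjointable A K) : K →L[ℂ] K) = adjoint a :=
  rfl

instance : StarModule ℂ (adjointable A K) where
  star_smul z a := Subtype.ext <| adjoint_eq_of_inner fun x y => by
    simp [adjoint_inner_right]

variable [StarOrderedRing A]

instance : CStarRing (adjointable A K) where
  norm_mul_self_le a := by
    have h (x : K) : ‖a x‖ ^ 2 ≤ ‖star a * a‖ * ‖x‖ ^ 2 := calc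
      ‖a x‖ ^ 2 ≤ ‖(star a * a) x‖ * ‖x‖ := norm_sq_le_of_inner_eq (adjoint_inner_left a) x
      _ ≤ ‖star a * a‖ * ‖x‖ * ‖x‖ := by gcongr; exact (star a * a : K →L[ℂ] K).le_opNorm _
      _ = ‖star a * a‖ * ‖x‖ ^ 2 := by ring
    have hle : ‖a‖ ≤ √‖star a * a‖ :=
      ContinuousLinearMap.opNorm_le_bound _ (Real.sqrt_nonneg _) fun x => by
        rw [← Real.sqrt_sq (norm_nonneg x), ← Real.sqrt_mul (norm_nonneg (star a * a))]
        exact Real.le_sqrt_of_sq_le (h x)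
    calc ‖a‖ * ‖a‖ ≤ √‖star a * a‖ * √‖star a * a‖ := mul_self_le_mul_self (norm_nonneg _) hle
      _ = ‖star a * a‖ := Real.mul_self_sqrt (norm_nonneg _)

lemma norm_adjoint_sub (a b : adjointable A K) :
    ‖adjoint a - adjoint b‖ = ‖(a : K →L[ℂ] K) - b‖ := by
  rw [← coe_star, ← coe_star, ← Subalgebra.coe_sub, ← star_sub]
  exact norm_star (a - b)

instance [CompleteSpace K] : CompleteSpace (adjointable A K) := by
  let graph : adjointable A K → (K →L[ℂ] K) × (K →L[ℂ] K) := fun a => (a, adjoint a)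
  have h_isom : Isometry graph := Isometry.of_dist_eq fun a b => by
    simp [graph, dist_eq_norm, norm_adjoint_sub]
  have h_range : Set.range graph = {p | ∀ x y, inner A (p.1 x) y = inner A x (p.2 y)} := by
    ext ⟨a, b⟩
    constructor
    · rintro ⟨a', h⟩
      cases h
      exact fun x y => (adjoint_inner_right a' x y).symm
    · exact fun h => ⟨⟨a, b, h⟩, Prod.ext rfl (adjoint_eq_of_inner h)⟩
  have h_closed : IsClosed {p : (K →L[ℂ] K) × (K →L[ℂ] K) |
      ∀ x y, inner A (p.1 x) y = inner A x (p.2 y)} := by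
    simp only [Set.ofPred_forall]
    refine isClosed_iInter fun x => isClosed_iInter fun y => isClosed_eq ?_ ?_
    · exact continuous_inner.comp
        ((continuous_fst.clm_apply continuous_const).prodMk continuous_const)
    · exact continuous_inner.comp
        (continuous_const.prodMk (continuous_snd.clm_apply continuous_const))
  rw [completeSpace_iff_isComplete_range h_isom.isUniformInducing, h_range]
  exact h_closed.isComplete

variable [CompleteSpace K]

instance : CStarAlgebra (adjointable A K) where

instance : PartialOrder (adjointable A K) := CStarAlgebra.spectralOrder _

instance : StarOrderedRing (adjointable A K) := CStarAlgebra.spectralOrderedRing _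

lemma isUnit_of_mul_norm_le_norm_apply {S : adjointable A K} (hS : IsSelfAdjoint S) {c : ℝ}
    (hc : 0 < c) (h : ∀ x, c * ‖x‖ ≤ ‖S x‖) : IsUnit S := by
  refine hS.isUnit_of_mul_norm_le_norm_mul hc fun R => ?_
  rw [← le_div_iff₀' hc]
  refine ContinuousLinearMap.opNorm_le_bound _ (by positivity) fun x => ?_
  rw [div_mul_eq_mul_div, le_div_iff₀' hc]
  calc c * ‖R x‖ ≤ ‖S (R x)‖ := h _
    _ ≤ ‖S * R‖ * ‖x‖ := (S * R : K →L[ℂ] K).le_opNorm x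

lemma inner_apply_self_nonneg_of_nonneg {S : adjointable A K} (hS : 0 ≤ S) (x : K) :
    0 ≤ inner A (S x) x := by
  obtain ⟨R, rfl⟩ := CStarAlgebra.nonneg_iff_eq_star_mul_self.mp hS
  rw [show (star R * R) x = adjoint R (R x) from rfl, adjoint_inner_left]
  exact inner_self_nonneg

lemma nonneg_of_inner_apply_self_nonneg {S : adjointable A K} (hS : IsSelfAdjoint S)
    (h : ∀ x, 0 ≤ inner A (S x) x) : 0 ≤ S := by
  rw [StarOrderedRing.nonneg_iff_spectrum_nonneg (R := ℝ) S hS]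
  intro t ht
  by_contra! ht_neg
  refine spectrum.mem_iff.mp ht ?_
  rw [← neg_sub, IsUnit.neg_iff]
  refine isUnit_of_mul_norm_le_norm_apply (hS.sub (.algebraMap _ (.all t))) (neg_pos.mpr ht_neg)
    fun x => mul_norm_le_of_smul_inner_self_le (A := A) (neg_nonneg.mpr ht_neg.le) ?_
  simpa [neg_smul, le_sub_iff_add_le] using h x

lemma exists_pos_smul_inner_self_le_of_isStrictlyPositive {S : adjointable A K}
    (hS : IsStrictlyPositive S) : ∃ m : ℝ, 0 < m ∧ ∀ x, m • inner A x x ≤ inner A (S x) x := by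
  rcases subsingleton_or_nontrivial (adjointable A K) with h | h
  · refine ⟨1, one_pos, fun x => ?_⟩
    have hx : x = 0 := by
      simpa using congrArg (fun a : adjointable A K => a x) (Subsingleton.elim 1 0)
    simp [hx]
  obtain ⟨m, hm, hmS⟩ := (CFC.exists_pos_algebraMap_le_iff hS.isSelfAdjoint).mpr
    fun t ht => hS.spectrum_pos ht
  refine ⟨m, hm, fun x => ?_⟩
  simpa [sub_nonneg] using inner_apply_self_nonneg_of_nonneg (sub_nonneg.mpr hmS) x

end adjointable

end

end CStarModuleRight

end

open CStarModuleRight adjointable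

/-- an adjointable operator `T : H → K` between Hilbert `A`-modules is
surjective iff `T*` is bounded below with respect to the inner product, i.e. there
is `m > 0` with `⟨T*x, T*x⟩ ≥ m⟨x, x⟩` for all `x ∈ K`. -/
theorem stmt_11
    {A : Type*} [CStarAlgebra A] [PartialOrder A] [StarOrderedRing A]
    {H : Type*} [NormedAddCommGroup H] [NormedSpace ℂ H] [CompleteSpace H]
    [SMul Aᵐᵒᵖ H] [CStarModuleRight A H]
    {K : Type*} [NormedAddCommGroup K] [NormedSpace ℂ K] [CompleteSpace K]
    [SMul Aᵐᵒᵖ K] [CStarModuleRight A K]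
    (T : H →L[ℂ] K) (Ts : K →L[ℂ] H)
    (hT : ∀ (x : H) (y : K), (inner A (T x) y : A) = inner A x (Ts y)) :
    Function.Surjective T ↔
      ∃ m : ℝ, 0 < m ∧ ∀ x : K, m • (inner A x x : A) ≤ inner A (Ts x) (Ts x) := by
  have hTTs (x y : K) : inner A (T (Ts x)) y = inner A x (T (Ts y)) := by
    rw [hT, ← star_inner, ← hT, star_inner]
  let S : adjointable A K := ⟨T ∘L Ts, T ∘L Ts, hTTs⟩
  have hS : IsSelfAdjoint S := Subtype.ext (adjoint_eq_of_inner hTTs)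
  have hS_inner (x : K) : inner A (S x) x = inner A (Ts x) (Ts x) := hT _ _
  constructor
  · intro hsurj
    obtain ⟨c, hc, hc_le⟩ := exists_mul_norm_le_norm_apply_adjoint_of_surjective hT hsurj
    have hS_unit : IsUnit S := isUnit_of_mul_norm_le_norm_apply hS hc hc_le
    have hS_nonneg : 0 ≤ S :=
      nonneg_of_inner_apply_self_nonneg hS fun x => (hS_inner x).symm ▸ inner_self_nonneg
    simpa only [hS_inner] using
      exists_pos_smul_inner_self_le_of_isStrictlyPositive ⟨hS_nonneg, hS_unit⟩
  · rintro ⟨m, hm, hm_le⟩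
    have hS_unit : IsUnit S := isUnit_of_mul_norm_le_norm_apply hS hm fun x =>
      mul_norm_le_of_smul_inner_self_le hm.le ((hm_le x).trans_eq (hS_inner x).symm)
    obtain ⟨R, hR⟩ := hS_unit.exists_right_inv
    exact fun y => ⟨Ts (R y), congrArg (fun a : adjointable A K => a y) hR⟩
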